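/- arXiv:2107.05349 — 4 statements merged into one kernel-verified Lean document; each statement's English description precedes it below -/
import Mathlib

section
/- Let ν > 0 and 0 < τ ≤ 1. Then the ℓ^{4/3} norm over k ∈ ℤ of the sequence k ↦ τ k^2 e^{-τ(ν k^4 - k^2)} is bounded by C τ^{5/16}, where C depends only on ν. -/
/-!
Put `τ = δ⁴` and `x = δ k`. Then the `k`-th term is `δ² x² e^{δ² x² - ν x⁴} ≤ δ² x² e^{x² - ν x⁴}`,
and `x² e^{x² - ν x⁴} ≤ B / (1 + x²)`. Raising to the power `4/3` and summing over `k` leaves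
`(δ² B)^{4/3}` times a Riemann sum of `1 / (1 + x²)` with mesh `δ`, which is `O(1/δ)` by comparison
with `∫ 1 / (1 + x²) = π`. Hence the sum is `O(δ^{8/3 - 1}) = O(τ^{5/12})`.
-/

open Real

lemma exp_neg_le_inv_one_add {u : ℝ} (hu : 0 ≤ u) : exp (-u) ≤ (1 + u)⁻¹ := by
  rw [exp_neg]
  exact inv_anti₀ (by positivity) (by linarith [add_one_le_exp u])

lemma exists_sq_mul_exp_le_div_one_add_sq {ν : ℝ} (hν : 0 < ν) :
    ∃ B > 0, ∀ x : ℝ, x ^ 2 * exp (x ^ 2 - ν * x ^ 4) ≤ B / (1 + x ^ 2) := by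
  refine ⟨exp (1 / (2 * ν)) * (1 + 4 / ν), by positivity, fun x => ?_⟩
  have hamgm : x ^ 2 - ν * x ^ 4 ≤ 1 / (2 * ν) + -(ν / 2 * x ^ 4) := by
    have : x ^ 2 ≤ 1 / (2 * ν) + ν / 2 * x ^ 4 := by
      rw [div_add' _ _ _ (by positivity), le_div_iff₀ (by positivity)]
      nlinarith [sq_nonneg (ν * x ^ 2 - 1)]
    linarith
  have hquartic : x ^ 2 * (1 + ν / 2 * x ^ 4)⁻¹ ≤ (1 + 4 / ν) / (1 + x ^ 2) := by
    rw [← div_eq_mul_inv, div_le_div_iff₀ (by positivity) (by positivity)]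
    have : x ^ 2 ≤ (1 + x ^ 4) / 2 := by nlinarith [sq_nonneg (x ^ 2 - 1)]
    have : 4 / ν * (ν / 2 * x ^ 4) = 2 * x ^ 4 := by field_simp; ring
    nlinarith [sq_nonneg x, div_pos (by norm_num : (0:ℝ) < 4) hν]
  calc x ^ 2 * exp (x ^ 2 - ν * x ^ 4)
      ≤ x ^ 2 * (exp (1 / (2 * ν)) * exp (-(ν / 2 * x ^ 4))) := by
        rw [← exp_add]; gcongr
    _ ≤ x ^ 2 * (exp (1 / (2 * ν)) * (1 + ν / 2 * x ^ 4)⁻¹) := by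
        gcongr; exact exp_neg_le_inv_one_add (by positivity)
    _ = exp (1 / (2 * ν)) * (x ^ 2 * (1 + ν / 2 * x ^ 4)⁻¹) := by ring
    _ ≤ exp (1 / (2 * ν)) * ((1 + 4 / ν) / (1 + x ^ 2)) := by gcongr
    _ = _ := by ring

lemma rpow_mul_le_rpow_mul_of_le_one {a y p : ℝ} (ha : 0 ≤ a) (hy₀ : 0 ≤ y) (hy₁ : y ≤ 1)
    (hp : 1 ≤ p) : (a * y) ^ p ≤ a ^ p * y := by
  rw [mul_rpow ha hy₀]
  gcongr
  exact rpow_le_self_of_le_one hy₀ hy₁ hp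

lemma pow_four_mul_sq_mul_exp_le {ν δ B x : ℝ} (hδ₀ : 0 ≤ δ) (hδ₁ : δ ≤ 1)
    (hB : ∀ x : ℝ, x ^ 2 * exp (x ^ 2 - ν * x ^ 4) ≤ B / (1 + x ^ 2)) :
    δ ^ 4 * x ^ 2 * exp (-δ ^ 4 * (ν * x ^ 4 - x ^ 2)) ≤ δ ^ 2 * B * (1 + (δ * x) ^ 2)⁻¹ := by
  have hrescale : -δ ^ 4 * (ν * x ^ 4 - x ^ 2) ≤ (δ * x) ^ 2 - ν * (δ * x) ^ 4 := by
    have : δ ^ 2 ≤ 1 := pow_le_one₀ hδ₀ hδ₁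
    have : 0 ≤ (δ * x) ^ 2 := sq_nonneg _
    nlinarith
  calc δ ^ 4 * x ^ 2 * exp (-δ ^ 4 * (ν * x ^ 4 - x ^ 2))
      ≤ δ ^ 2 * ((δ * x) ^ 2 * exp ((δ * x) ^ 2 - ν * (δ * x) ^ 4)) := by
        rw [show δ ^ 4 * x ^ 2 = δ ^ 2 * (δ * x) ^ 2 by ring, mul_assoc]
        gcongr
    _ ≤ δ ^ 2 * (B / (1 + (δ * x) ^ 2)) := by gcongr; exact hB _
    _ = _ := by ring

lemma sum_range_inv_one_add_mul_sq_le {δ : ℝ} (hδ : 0 < δ) (N : ℕ) :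
    ∑ i ∈ Finset.range N, (1 + (δ * (i + 1)) ^ 2)⁻¹ ≤ π / (2 * δ) := by
  have hanti : AntitoneOn (fun x : ℝ => (1 + (δ * x) ^ 2)⁻¹) (Set.Icc 0 (0 + N)) := by
    intro x hx y _ hxy
    have hx₀ : 0 ≤ x := hx.1
    dsimp only
    gcongr
  calc ∑ i ∈ Finset.range N, (1 + (δ * (i + 1)) ^ 2)⁻¹
      ≤ ∫ x in (0 : ℝ)..0 + N, (1 + (δ * x) ^ 2)⁻¹ := by
        simpa using hanti.sum_le_integral
    _ = δ⁻¹ * arctan (δ * N) := by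
        simp [intervalIntegral.integral_comp_mul_left (fun x => (1 + x ^ 2)⁻¹) hδ.ne']
    _ ≤ δ⁻¹ * (π / 2) := by gcongr; exact (arctan_lt_pi_div_two _).le
    _ = π / (2 * δ) := by field_simp

lemma summable_and_tsum_int_inv_one_add_mul_sq_le {δ : ℝ} (hδ : 0 < δ) :
    Summable (fun k : ℤ => (1 + (δ * k) ^ 2)⁻¹) ∧ ∑' k : ℤ, (1 + (δ * k) ^ 2)⁻¹ ≤ 1 + π / δ := by
  set f : ℤ → ℝ := fun k => (1 + (δ * k) ^ 2)⁻¹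
  have hpos : ∀ n : ℕ, f (n + 1) = (1 + (δ * (n + 1)) ^ 2)⁻¹ := by simp [f]
  have hneg : ∀ n : ℕ, f (-(n + 1)) = (1 + (δ * (n + 1)) ^ 2)⁻¹ := fun n => by
    simp only [f]; push_cast; ring
  have hsum : Summable fun n : ℕ => (1 + (δ * (n + 1)) ^ 2)⁻¹ :=
    summable_of_sum_range_le (fun _ => by positivity) (sum_range_inv_one_add_mul_sq_le hδ)
  have htsum : ∑' n : ℕ, (1 + (δ * (n + 1)) ^ 2)⁻¹ ≤ π / (2 * δ) :=
    Real.tsum_le_of_sum_range_le (fun _ => by positivity) (sum_range_inv_one_add_mul_sq_le hδ)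
  simp_rw [← hpos] at hsum htsum
  have hsum' : Summable fun n : ℕ => f (-(n + 1)) := by simpa only [hneg, hpos] using hsum
  refine ⟨.of_add_one_of_neg_add_one hsum hsum', ?_⟩
  rw [tsum_of_add_one_of_neg_add_one hsum hsum']
  simp only [hneg, ← hpos]
  have hf₀ : f 0 = 1 := by simp [f]
  have hhalves : π / (2 * δ) + π / (2 * δ) = π / δ := by field_simp; ring
  rw [hf₀]
  linarith

lemma tsum_rpow_four_thirds_le {ν δ B : ℝ} (hδ₀ : 0 < δ) (hδ₁ : δ ≤ 1) (hB₀ : 0 < B)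
    (hB : ∀ x : ℝ, x ^ 2 * exp (x ^ 2 - ν * x ^ 4) ≤ B / (1 + x ^ 2)) :
    ∑' k : ℤ, (δ ^ 4 * (k : ℝ) ^ 2 * exp (-δ ^ 4 * (ν * (k : ℝ) ^ 4 - (k : ℝ) ^ 2))) ^ ((4 : ℝ) / 3)
      ≤ B ^ ((4 : ℝ) / 3) * (1 + π) * δ ^ ((5 : ℝ) / 3) := by
  obtain ⟨hsum, htsum⟩ := summable_and_tsum_int_inv_one_add_mul_sq_le hδ₀
  have hterm : ∀ k : ℤ,
      (δ ^ 4 * (k : ℝ) ^ 2 * exp (-δ ^ 4 * (ν * (k : ℝ) ^ 4 - (k : ℝ) ^ 2))) ^ ((4 : ℝ) / 3)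
        ≤ (δ ^ 2 * B) ^ ((4 : ℝ) / 3) * (1 + (δ * k) ^ 2)⁻¹ := fun k =>
    (rpow_le_rpow (by positivity) (pow_four_mul_sq_mul_exp_le hδ₀.le hδ₁ hB) (by norm_num)).trans
      (rpow_mul_le_rpow_mul_of_le_one (by positivity) (by positivity)
        (inv_le_one_of_one_le₀ (by nlinarith [sq_nonneg (δ * k)])) (by norm_num))
  have hπδ : 1 + π / δ ≤ (1 + π) / δ := by
    rw [add_div]; gcongr; exact one_le_one_div hδ₀ hδ₁
  calc _ ≤ ∑' k : ℤ, (δ ^ 2 * B) ^ ((4 : ℝ) / 3) * (1 + (δ * k) ^ 2)⁻¹ :=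
        (hsum.mul_left _).of_nonneg_of_le (fun _ => by positivity) hterm |>.tsum_le_tsum hterm
          (hsum.mul_left _)
    _ = (δ ^ 2 * B) ^ ((4 : ℝ) / 3) * ∑' k : ℤ, (1 + (δ * k) ^ 2)⁻¹ := tsum_mul_left
    _ ≤ (δ ^ 2 * B) ^ ((4 : ℝ) / 3) * ((1 + π) / δ) := by gcongr; exact htsum.trans hπδ
    _ = B ^ ((4 : ℝ) / 3) * (1 + π) * δ ^ ((5 : ℝ) / 3) := by
        rw [mul_rpow (by positivity) hB₀.le, ← rpow_natCast, ← rpow_mul hδ₀.le,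
          show (5 : ℝ) / 3 = (2 : ℕ) * (4 / 3) - 1 by norm_num, rpow_sub_one hδ₀.ne']
        ring

/-- The `ℓ^{4/3}` norm over `k ∈ ℤ` of the sequence `k ↦ τ k² e^{-τ(ν k⁴ - k²)}`
is bounded by `C(ν) τ^{5/16}` for `0 < τ ≤ 1`. -/
theorem l43_multiplier_bound (ν : ℝ) (hν : 0 < ν) :
    ∃ C : ℝ, 0 < C ∧ ∀ τ : ℝ, 0 < τ → τ ≤ 1 →
      (∑' k : ℤ, (τ * (k : ℝ) ^ 2 *
          Real.exp (-τ * (ν * (k : ℝ) ^ 4 - (k : ℝ) ^ 2))) ^ ((4 : ℝ) / 3)) ^ ((3 : ℝ) / 4)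
        ≤ C * τ ^ ((5 : ℝ) / 16) := by
  obtain ⟨B, hB₀, hB⟩ := exists_sq_mul_exp_le_div_one_add_sq hν
  refine ⟨(B ^ ((4 : ℝ) / 3) * (1 + π)) ^ ((3 : ℝ) / 4), by positivity, fun τ hτ₀ hτ₁ => ?_⟩
  obtain ⟨δ, hδ₀, hδ₁, rfl⟩ : ∃ δ : ℝ, 0 < δ ∧ δ ≤ 1 ∧ τ = δ ^ 4 :=
    ⟨τ ^ ((1 : ℝ) / 4), by positivity, rpow_le_one hτ₀.le hτ₁ (by norm_num), by
      rw [← rpow_natCast, ← rpow_mul hτ₀.le]; norm_num⟩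
  calc _ ≤ (B ^ ((4 : ℝ) / 3) * (1 + π) * δ ^ ((5 : ℝ) / 3)) ^ ((3 : ℝ) / 4) :=
        rpow_le_rpow (tsum_nonneg fun _ => by positivity)
          (tsum_rpow_four_thirds_le hδ₀ hδ₁ hB₀ hB) (by norm_num)
    _ = (B ^ ((4 : ℝ) / 3) * (1 + π)) ^ ((3 : ℝ) / 4) * (δ ^ 4) ^ ((5 : ℝ) / 16) := by
        rw [mul_rpow (by positivity) (by positivity), ← rpow_natCast δ 4, ← rpow_mul hδ₀.le,
          ← rpow_mul hδ₀.le]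
        norm_num
end

section
/- Let w be a smooth solution on [0, τ] × 𝕋 of ∂_t w = ∂_{xx}(w^3). Then the L^4 norm of w(t, ·) is nonincreasing in t: for all 0 ≤ s ≤ t ≤ τ, ‖w(t, ·)‖_{L^4(𝕋)} ≤ ‖w(s, ·)‖_{L^4(𝕋)}. -/
noncomputable section
open scoped Real
open MeasureTheory Set
open scoped ContDiff

/-- `L⁴` norm on the 2π-torus. -/
def torusL4 (f : ℝ → ℝ) : ℝ := (∫ x in (-π)..π, (f x) ^ 4) ^ ((1 : ℝ) / 4)

/-- For a smooth solution of `∂_t w = ∂_{xx}(w³)` on the torus,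
the `L⁴` norm is nonincreasing in time. -/
theorem L4_nonincreasing (τ : ℝ) (hτ : 0 < τ) (w : ℝ → ℝ → ℝ)
    (hw : ContDiff ℝ (⊤ : ℕ∞) (Function.uncurry w))
    (hper : ∀ t, Function.Periodic (w t) (2 * π))
    (hpde : ∀ t ∈ Set.Icc (0 : ℝ) τ, ∀ x : ℝ,
      deriv (fun s => w s x) t = iteratedDeriv 2 (fun y => (w t y) ^ 3) x) :
    ∀ s t : ℝ, 0 ≤ s → s ≤ t → t ≤ τ → torusL4 (w t) ≤ torusL4 (w s) := by
  intro s t hs hst htτ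
  have hWd : Differentiable ℝ (Function.uncurry w) := hw.differentiable (by simp)
  have hwc : Continuous (Function.uncurry w) := hw.continuous
  set P : ℝ → ℝ → ℝ := fun u x => fderiv ℝ (Function.uncurry w) (u, x) (1, 0) with hPdef
  have hP : ∀ u x, HasDerivAt (fun r => w r x) (P u x) u := by
    intro u x
    have h1 : HasDerivAt (fun r : ℝ => (r, x)) ((1 : ℝ), (0 : ℝ)) u :=
      (hasDerivAt_id u).prodMk (hasDerivAt_const u x)
    exact (hWd (u, x)).hasFDerivAt.comp_hasDerivAt u h1
  have hPc : Continuous (fun p : ℝ × ℝ => P p.1 p.2) := by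
    have h1 : Continuous (fderiv ℝ (Function.uncurry w)) := hw.continuous_fderiv (by simp)
    exact h1.clm_apply continuous_const
  have hwt : ∀ u : ℝ, ContDiff ℝ (⊤ : ℕ∞) (w u) := fun u =>
    hw.comp (contDiff_const.prodMk contDiff_id)
  have hF'c : Continuous (fun p : ℝ × ℝ => 4 * (w p.1 p.2) ^ 3 * P p.1 p.2) := by
    exact (continuous_const.mul (hwc.pow 3)).mul hPc
  set E : ℝ → ℝ := fun u => ∫ x in (-π)..π, (w u x) ^ 4 with hEdef
  set D : ℝ → ℝ := fun u => ∫ x in (-π)..π, 4 * (w u x) ^ 3 * P u x with hDdef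
  -- derivative of E
  have hE : ∀ t₀ : ℝ, HasDerivAt E (D t₀) t₀ := by
    intro t₀
    obtain ⟨C, hC⟩ : ∃ C, ∀ p ∈ (Metric.closedBall t₀ 1) ×ˢ (uIcc (-π) π),
        ‖4 * (w p.1 p.2) ^ 3 * P p.1 p.2‖ ≤ C :=
      ((isCompact_closedBall t₀ 1).prod isCompact_uIcc).exists_bound_of_continuousOn
        hF'c.continuousOn
    have key := intervalIntegral.hasDerivAt_integral_of_dominated_loc_of_deriv_le
      (F := fun u x => (w u x) ^ 4) (F' := fun u x => 4 * (w u x) ^ 3 * P u x)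
      (x₀ := t₀) (bound := fun _ => C) (a := -π) (b := π) (μ := volume) (s := Metric.ball t₀ 1)
      (Metric.ball_mem_nhds t₀ one_pos)
      (Filter.Eventually.of_forall fun u =>
        (((hwt u).continuous).pow 4).aestronglyMeasurable)
      ((((hwt t₀).continuous).pow 4).intervalIntegrable _ _)
      ((continuous_const.mul (((hwt t₀).continuous).pow 3)).mul
        (hPc.comp (continuous_const.prodMk continuous_id))).aestronglyMeasurable
      (Filter.Eventually.of_forall fun x hx u hu => by
        exact hC (u, x) ⟨Metric.ball_subset_closedBall hu, uIoc_subset_uIcc hx⟩)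
      (intervalIntegrable_const)
      (Filter.Eventually.of_forall fun x _ u _ => by
        simpa using (hP u x).fun_pow 4)
    exact key.2
  -- the derivative is nonpositive on `[0, τ]`
  have hkey : ∀ u ∈ Icc (0 : ℝ) τ, D u ≤ 0 := by
    intro u hu
    set g : ℝ → ℝ := fun y => (w u y) ^ 3 with hgdef
    have hg : ContDiff ℝ ∞ g := ((hwt u).of_le (by simp)).pow 3
    have hg1 : ContDiff ℝ ∞ (deriv g) := (contDiff_infty_iff_deriv.mp hg).2
    have hPg : ∀ x, P u x = deriv (deriv g) x := by
      intro x
      have h1 : deriv (fun r => w r x) u = P u x := (hP u x).deriv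
      have h2 := hpde u hu x
      rw [h1] at h2
      rw [h2, show (2 : ℕ) = 1 + 1 from rfl, iteratedDeriv_succ, iteratedDeriv_one]
    have hgd : ∀ x ∈ uIcc (-π) π, HasDerivAt g (deriv g x) x := fun x _ =>
      (hg.differentiable (by norm_num) x).hasDerivAt
    have hg1d : ∀ x ∈ uIcc (-π) π, HasDerivAt (deriv g) (deriv (deriv g) x) x := fun x _ =>
      (hg1.differentiable (by norm_num) x).hasDerivAt
    have hi1 : IntervalIntegrable (deriv g) volume (-π) π :=
      hg1.continuous.intervalIntegrable _ _
    have hi2 : IntervalIntegrable (deriv (deriv g)) volume (-π) π :=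
      ((contDiff_infty_iff_deriv.mp hg1).2.continuous).intervalIntegrable _ _
    have ibp := intervalIntegral.integral_mul_deriv_eq_deriv_mul hgd hg1d hi1 hi2
    have hgp : Function.Periodic g (2 * π) := fun x => by
      simp only [hgdef]; rw [hper u x]
    have hg1p : Function.Periodic (deriv g) (2 * π) := by
      intro x
      have hfun : (fun y => g (y + 2 * π)) = g := funext hgp
      calc deriv g (x + 2 * π) = deriv (fun y => g (y + 2 * π)) x :=
            (deriv_comp_add_const g (2 * π) x).symm
        _ = deriv g x := by rw [hfun]
    have e1 : g π = g (-π) := by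
      have := hgp (-π); rwa [show -π + 2 * π = π by ring] at this
    have e2 : deriv g π = deriv g (-π) := by
      have := hg1p (-π); rwa [show -π + 2 * π = π by ring] at this
    have hD : D u = 4 * ∫ x in (-π)..π, g x * deriv (deriv g) x := by
      rw [hDdef]
      rw [← intervalIntegral.integral_const_mul]
      apply intervalIntegral.integral_congr
      intro x _
      rw [hgdef]
      simp only
      rw [hPg x]
      ring
    have hnn : (0 : ℝ) ≤ ∫ x in (-π)..π, deriv g x * deriv g x :=
      intervalIntegral.integral_nonneg (by linarith [Real.pi_pos])
        (fun x _ => mul_self_nonneg _)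
    rw [hD, ibp, e1, e2]
    nlinarith
  -- E is antitone on [0, τ]
  have hEanti : AntitoneOn E (Icc 0 τ) := by
    apply antitoneOn_of_deriv_nonpos (convex_Icc 0 τ)
    · exact fun x _ => (hE x).continuousAt.continuousWithinAt
    · exact fun x _ => (hE x).differentiableAt.differentiableWithinAt
    · intro x hx
      rw [interior_Icc] at hx
      rw [(hE x).deriv]
      exact hkey x ⟨le_of_lt hx.1, le_of_lt hx.2⟩
  have hEle : E t ≤ E s :=
    hEanti ⟨hs, hst.trans htτ⟩ ⟨hs.trans hst, htτ⟩ hst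
  have hE0 : 0 ≤ E t :=
    intervalIntegral.integral_nonneg (by linarith [Real.pi_pos]) (fun x _ => by positivity)
  unfold torusL4
  exact Real.rpow_le_rpow hE0 hEle (by norm_num)
end
end

section
/- Let ν > 0 and let f ∈ H^2(𝕋) be real-valued with mean zero, satisfying ‖ν ∂_{xx} f - f^3 + mean(f^3) + f‖_{L^2(𝕋)} ≤ 1. Then ν ‖∂_x f‖_{L^2}^2 + ‖f^2 - 1/2‖_{L^2}^2 ≤ ‖f‖_{L^2} + π/2. In particular ‖f‖_{H^1} is bounded by a constant depending only on ν. -/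
/-!
Pairing the residual `R = ν f'' - f³ + mean(f³) + f` with `f`: periodicity kills the boundary
terms of the integration by parts and the zero mean kills the constant, so
`∫ f R = -ν ‖f'‖² - ∫ f⁴ + ∫ f²`, while `‖f² - 1/2‖² = ∫ f⁴ - ∫ f² + π/2`. Cauchy–Schwarz and
`‖R‖ ≤ 1` give `-∫ f R ≤ ‖f‖`, which is the energy bound. For the `H¹` bound, Cauchy–Schwarz
against `1` gives `‖f‖⁴ ≤ 2π ∫ f⁴ ≤ 8 (‖f‖² + ‖f‖)`, forcing `‖f‖ ≤ 4`, and then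
`ν ‖f'‖² ≤ 4 + π/2 ≤ 6`.
-/

noncomputable section
open scoped Real

/-- `L²` norm on the 2π-torus. -/
def torusL2 (f : ℝ → ℝ) : ℝ := Real.sqrt (∫ x in (-π)..π, (f x) ^ 2)

/-- `H^k` Sobolev norm on the 2π-torus. -/
def sobNorm (k : ℕ) (f : ℝ → ℝ) : ℝ :=
  Real.sqrt (∑ j ∈ Finset.range (k + 1), ∫ x in (-π)..π, (iteratedDeriv j f x) ^ 2)

open MeasureTheory intervalIntegral

section CauchySchwarz

variable {a b : ℝ} {u v : ℝ → ℝ}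

theorem intervalIntegral.sq_integral_mul_le (hab : a ≤ b)
    (hu : IntervalIntegrable (fun x => u x ^ 2) volume a b)
    (huv : IntervalIntegrable (fun x => u x * v x) volume a b)
    (hv : IntervalIntegrable (fun x => v x ^ 2) volume a b) :
    (∫ x in a..b, u x * v x) ^ 2 ≤ (∫ x in a..b, u x ^ 2) * ∫ x in a..b, v x ^ 2 := by
  have hquad : ∀ t : ℝ, 0 ≤ (∫ x in a..b, u x ^ 2) * (t * t)
      + 2 * (∫ x in a..b, u x * v x) * t + ∫ x in a..b, v x ^ 2 := by
    intro t
    have hexpand : ∫ x in a..b, (t * u x + v x) ^ 2 = (∫ x in a..b, u x ^ 2) * (t * t)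
        + 2 * (∫ x in a..b, u x * v x) * t + ∫ x in a..b, v x ^ 2 := by
      have h : (fun x => (t * u x + v x) ^ 2)
          = fun x => (t * t) * u x ^ 2 + (2 * t) * (u x * v x) + v x ^ 2 := by
        funext x; ring
      rw [h, integral_add ((hu.const_mul _).add (huv.const_mul _)) hv,
        integral_add (hu.const_mul _) (huv.const_mul _), integral_const_mul, integral_const_mul]
      ring
    rw [← hexpand]
    exact integral_nonneg hab fun x _ => sq_nonneg _
  have := discrim_le_zero hquad
  rw [discrim] at this
  nlinarith

theorem intervalIntegral.sq_integral_le (hab : a ≤ b)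
    (hu : IntervalIntegrable u volume a b)
    (hu2 : IntervalIntegrable (fun x => u x ^ 2) volume a b) :
    (∫ x in a..b, u x) ^ 2 ≤ (b - a) * ∫ x in a..b, u x ^ 2 := by
  have h := sq_integral_mul_le (v := fun _ => 1) hab hu2 (by simpa using hu) (by simp)
  simp only [mul_one, one_pow, integral_const, smul_eq_mul] at h
  linarith

end CauchySchwarz

theorem Function.Periodic.integral_mul_iteratedDeriv_two {f : ℝ → ℝ} {T : ℝ}
    (hper : f.Periodic T) (hf : ContDiff ℝ 2 f) (a : ℝ) :
    ∫ x in a..a + T, f x * iteratedDeriv 2 f x = -∫ x in a..a + T, deriv f x ^ 2 := by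
  have hf' : ContDiff ℝ 1 (deriv f) := (contDiff_succ_iff_deriv (n := 1)).mp hf |>.2.2
  have hderiv_per : deriv f (a + T) = deriv f a := by
    rw [← deriv_comp_add_const, funext hper]
  rw [iteratedDeriv_succ, iteratedDeriv_one,
    integral_mul_deriv_eq_deriv_mul (fun x _ => (hf.differentiable two_ne_zero x).hasDerivAt)
      (fun x _ => (hf'.differentiable one_ne_zero x).hasDerivAt)
      (hf'.continuous.intervalIntegrable _ _)
      ((hf'.continuous_deriv le_rfl).intervalIntegrable _ _),
    hper a, hderiv_per]
  simp only [sub_self, zero_sub, sq]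

theorem intervalIntegral.integral_sq_sub_half_sq {f : ℝ → ℝ} (hf : Continuous f) (a b : ℝ) :
    ∫ x in a..b, (f x ^ 2 - 1 / 2) ^ 2
      = (∫ x in a..b, f x ^ 4) - (∫ x in a..b, f x ^ 2) + (b - a) / 4 := by
  have h : (fun x => (f x ^ 2 - 1 / 2) ^ 2) = fun x => f x ^ 4 - f x ^ 2 + 1 / 4 := by
    funext x; ring
  have h4 : IntervalIntegrable (fun x => f x ^ 4) volume a b := (hf.pow 4).intervalIntegrable _ _
  have h2 : IntervalIntegrable (fun x => f x ^ 2) volume a b := (hf.pow 2).intervalIntegrable _ _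
  rw [h, integral_add (h4.sub h2) intervalIntegrable_const, integral_sub h4 h2, integral_const,
    smul_eq_mul]
  ring

theorem torusL2_sq (u : ℝ → ℝ) : torusL2 u ^ 2 = ∫ x in (-π)..π, u x ^ 2 :=
  Real.sq_sqrt (integral_nonneg (by linarith [Real.pi_pos]) fun _ _ => sq_nonneg _)

theorem torusL2_nonneg (u : ℝ → ℝ) : 0 ≤ torusL2 u := Real.sqrt_nonneg _

theorem torusL2_neg (u : ℝ → ℝ) : torusL2 (fun x => -u x) = torusL2 u := by
  simp only [torusL2, neg_sq]

theorem integral_mul_le_torusL2_mul {u v : ℝ → ℝ} (hu : Continuous u) (hv : Continuous v) :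
    ∫ x in (-π)..π, u x * v x ≤ torusL2 u * torusL2 v := by
  rw [torusL2, torusL2, ← Real.sqrt_mul (integral_nonneg (by linarith [Real.pi_pos])
    fun _ _ => sq_nonneg _)]
  exact (le_abs_self _).trans <| Real.abs_le_sqrt <| sq_integral_mul_le
    (by linarith [Real.pi_pos]) ((hu.pow 2).intervalIntegrable _ _)
    ((hu.mul hv).intervalIntegrable _ _) ((hv.pow 2).intervalIntegrable _ _)

theorem sobNorm_one (f : ℝ → ℝ) : sobNorm 1 f = √(torusL2 f ^ 2 + torusL2 (deriv f) ^ 2) := by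
  simp [sobNorm, Finset.sum_range_succ, torusL2_sq]

def allenCahnResidual (ν : ℝ) (f : ℝ → ℝ) (x : ℝ) : ℝ :=
  ν * iteratedDeriv 2 f x - f x ^ 3 + (2 * π)⁻¹ * (∫ y in (-π)..π, f y ^ 3) + f x

variable {ν : ℝ} {f : ℝ → ℝ}

theorem continuous_allenCahnResidual (hf : ContDiff ℝ 2 f) : Continuous (allenCahnResidual ν f) :=
  (((continuous_const.mul (hf.continuous_iteratedDeriv 2 le_rfl)).sub (hf.continuous.pow 3)).add
    continuous_const).add hf.continuous

theorem integral_mul_allenCahnResidual (hf : ContDiff ℝ 2 f) (hper : f.Periodic (2 * π))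
    (hmean : ∫ x in (-π)..π, f x = 0) :
    ∫ x in (-π)..π, f x * allenCahnResidual ν f x
      = -(ν * ∫ x in (-π)..π, deriv f x ^ 2) - (∫ x in (-π)..π, f x ^ 4)
        + ∫ x in (-π)..π, f x ^ 2 := by
  set c := (2 * π)⁻¹ * ∫ y in (-π)..π, f y ^ 3
  have hibp := hper.integral_mul_iteratedDeriv_two hf (-π)
  rw [show -π + 2 * π = π by ring] at hibp
  have hc := hf.continuous
  have i1 : IntervalIntegrable (fun x => ν * (f x * iteratedDeriv 2 f x)) volume (-π) π :=
    (continuous_const.mul (hc.mul (hf.continuous_iteratedDeriv 2 le_rfl))).intervalIntegrable _ _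
  have i2 : IntervalIntegrable (fun x => f x ^ 4) volume (-π) π := (hc.pow 4).intervalIntegrable _ _
  have i3 : IntervalIntegrable (fun x => c * f x) volume (-π) π :=
    (continuous_const.mul hc).intervalIntegrable _ _
  have i4 : IntervalIntegrable (fun x => f x ^ 2) volume (-π) π := (hc.pow 2).intervalIntegrable _ _
  have h : (fun x => f x * allenCahnResidual ν f x)
      = fun x => ν * (f x * iteratedDeriv 2 f x) - f x ^ 4 + c * f x + f x ^ 2 := by
    funext x; simp only [allenCahnResidual, c]; ring
  rw [h, integral_add ((i1.sub i2).add i3) i4, integral_add (i1.sub i2) i3, integral_sub i1 i2,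
    intervalIntegral.integral_const_mul, intervalIntegral.integral_const_mul, hibp, hmean]
  ring

theorem energy_le_of_torusL2_allenCahnResidual_le_one (hf : ContDiff ℝ 2 f)
    (hper : f.Periodic (2 * π)) (hmean : ∫ x in (-π)..π, f x = 0)
    (hR : torusL2 (allenCahnResidual ν f) ≤ 1) :
    ν * torusL2 (deriv f) ^ 2 + torusL2 (fun x => f x ^ 2 - 1 / 2) ^ 2 ≤ torusL2 f + π / 2 := by
  have hpair : -∫ x in (-π)..π, f x * allenCahnResidual ν f x ≤ torusL2 f :=
    calc -∫ x in (-π)..π, f x * allenCahnResidual ν f x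
        = ∫ x in (-π)..π, f x * -allenCahnResidual ν f x := by
          simp only [mul_neg, intervalIntegral.integral_neg]
      _ ≤ torusL2 f * torusL2 (fun x => -allenCahnResidual ν f x) :=
          integral_mul_le_torusL2_mul hf.continuous (continuous_allenCahnResidual hf).neg
      _ ≤ torusL2 f := by
          rw [torusL2_neg]
          exact mul_le_of_le_one_right (torusL2_nonneg f) hR
  rw [integral_mul_allenCahnResidual hf hper hmean] at hpair
  rw [torusL2_sq, torusL2_sq, integral_sq_sub_half_sq hf.continuous]
  linarith

theorem torusL2_le_four_of_energy_le (hf : Continuous f) (hν : 0 ≤ ν)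
    (hE : ν * torusL2 (deriv f) ^ 2 + torusL2 (fun x => f x ^ 2 - 1 / 2) ^ 2 ≤ torusL2 f + π / 2) :
    torusL2 f ≤ 4 := by
  have hL4 : (torusL2 f ^ 2) ^ 2 ≤ 2 * π * ∫ x in (-π)..π, f x ^ 4 := by
    have h := sq_integral_le (a := -π) (b := π) (u := fun x => f x ^ 2) (by linarith [Real.pi_pos])
      ((by fun_prop : Continuous fun x => f x ^ 2).intervalIntegrable _ _)
      ((by fun_prop : Continuous fun x => (f x ^ 2) ^ 2).intervalIntegrable _ _)
    rw [torusL2_sq, show 2 * π = π - -π by ring]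
    simpa only [← pow_mul] using h
  rw [torusL2_sq (fun x => f x ^ 2 - 1 / 2), integral_sq_sub_half_sq hf, ← torusL2_sq] at hE
  set s := torusL2 f
  set q := ∫ x in (-π)..π, f x ^ 4
  have hq : q ≤ s ^ 2 + s := by linarith [mul_nonneg hν (sq_nonneg (torusL2 (deriv f)))]
  have hs4 : s ^ 4 ≤ 8 * (s ^ 2 + s) := by nlinarith [Real.pi_le_four, Real.pi_pos]
  have hs : 0 ≤ s := torusL2_nonneg f
  by_contra! h4
  nlinarith [mul_lt_mul h4 h4.le (by norm_num) hs]

/-- If a mean-zero `f ∈ H²(𝕋)` satisfies `‖ν f'' - f³ + mean(f³) + f‖_{L²} ≤ 1`, then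
`ν ‖f'‖² + ‖f² - 1/2‖² ≤ ‖f‖_{L²} + π/2`; in particular `‖f‖_{H¹} ≤ C(ν)`. -/
theorem almost_steady_energy_bound (ν : ℝ) (hν : 0 < ν) :
    (∀ f : ℝ → ℝ, ContDiff ℝ 2 f → Function.Periodic f (2 * π) →
      (∫ x in (-π)..π, f x) = 0 →
      torusL2 (fun x => ν * iteratedDeriv 2 f x - (f x) ^ 3
          + (2 * π)⁻¹ * (∫ y in (-π)..π, (f y) ^ 3) + f x) ≤ 1 →
      ν * (torusL2 (deriv f)) ^ 2 + (torusL2 (fun x => (f x) ^ 2 - 1 / 2)) ^ 2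
        ≤ torusL2 f + π / 2) ∧
    ∃ C : ℝ, 0 < C ∧ ∀ f : ℝ → ℝ, ContDiff ℝ 2 f → Function.Periodic f (2 * π) →
      (∫ x in (-π)..π, f x) = 0 →
      torusL2 (fun x => ν * iteratedDeriv 2 f x - (f x) ^ 3
          + (2 * π)⁻¹ * (∫ y in (-π)..π, (f y) ^ 3) + f x) ≤ 1 →
      sobNorm 1 f ≤ C := by
  refine ⟨fun f hf hper hmean hR => energy_le_of_torusL2_allenCahnResidual_le_one hf hper hmean hR,
    √(16 + 6 / ν), by positivity, ?_⟩
  intro f hf hper hmean hR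
  have hE := energy_le_of_torusL2_allenCahnResidual_le_one hf hper hmean hR
  have hs := torusL2_le_four_of_energy_le hf.continuous hν.le hE
  have hderiv : torusL2 (deriv f) ^ 2 ≤ 6 / ν := by
    rw [le_div_iff₀ hν]
    nlinarith [Real.pi_le_four, sq_nonneg (torusL2 fun x => f x ^ 2 - 1 / 2)]
  rw [sobNorm_one]
  gcongr
  nlinarith [torusL2_nonneg f]
end
end

section
/- Let b : 𝕋 → ℝ be smooth and let w solve ∂_t w = ∂_{xx}(w^3) on [0, τ] × 𝕋 with w(0) = b, with uniform Sobolev bounds on [0, τ]. Then w(τ) = b + τ ∂_{xx}(b^3) + (τ^2/2) ∂_{xx}(3 b^2 ∂_{xx}(b^3)) + O(τ^3), where the O(τ^3) error is measured in L^2(𝕋) with constant depending only on the assumed Sobolev bounds of w. -/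
noncomputable section
open scoped Real ContDiff
open Set Function

namespace NFT

lemma coe_le_inf (n : ℕ) : (n : WithTop ℕ∞) ≤ ∞ := by
  rw [show ((n:WithTop ℕ∞)) = ((n:ℕ∞):WithTop ℕ∞) by norm_cast]
  exact WithTop.coe_le_coe.2 le_top

lemma two_le_inf : (2 : WithTop ℕ∞) ≤ ∞ := by
  rw [show ((2:WithTop ℕ∞)) = ((2:ℕ∞):WithTop ℕ∞) by norm_cast]
  exact WithTop.coe_le_coe.2 le_top

def Dt (F : ℝ × ℝ → ℝ) : ℝ × ℝ → ℝ := fun p => deriv (fun s => F (s, p.2)) p.1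
def Dx (F : ℝ × ℝ → ℝ) : ℝ × ℝ → ℝ := fun p => deriv (fun y => F (p.1, y)) p.2

lemma hasDerivAt_sliceT {F : ℝ×ℝ→ℝ} {t x : ℝ} (hF : DifferentiableAt ℝ F (t,x)) :
    HasDerivAt (fun s => F (s, x)) (fderiv ℝ F (t,x) (1,0)) t :=
  hF.hasFDerivAt.comp_hasDerivAt t ((hasDerivAt_id t).prodMk (hasDerivAt_const t x))

lemma hasDerivAt_sliceX {F : ℝ×ℝ→ℝ} {t x : ℝ} (hF : DifferentiableAt ℝ F (t,x)) :
    HasDerivAt (fun y => F (t, y)) (fderiv ℝ F (t,x) (0,1)) x :=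
  hF.hasFDerivAt.comp_hasDerivAt x ((hasDerivAt_const x t).prodMk (hasDerivAt_id x))

lemma contDiff_sliceT {F : ℝ×ℝ→ℝ} (hF : ContDiff ℝ ∞ F) (x : ℝ) :
    ContDiff ℝ ∞ (fun s => F (s, x)) :=
  hF.comp (contDiff_id.prodMk contDiff_const)

lemma contDiff_sliceX {F : ℝ×ℝ→ℝ} (hF : ContDiff ℝ ∞ F) (t : ℝ) :
    ContDiff ℝ ∞ (fun y => F (t, y)) :=
  hF.comp (contDiff_const.prodMk contDiff_id)

lemma Dt_eq {F : ℝ×ℝ→ℝ} (hF : Differentiable ℝ F) :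
    Dt F = fun p => fderiv ℝ F p (1,0) :=
  funext fun p => (hasDerivAt_sliceT (hF (p.1, p.2))).deriv

lemma Dx_eq {F : ℝ×ℝ→ℝ} (hF : Differentiable ℝ F) :
    Dx F = fun p => fderiv ℝ F p (0,1) :=
  funext fun p => (hasDerivAt_sliceX (hF (p.1, p.2))).deriv

lemma contDiff_dt {F : ℝ×ℝ→ℝ} (hF : ContDiff ℝ ∞ F) : ContDiff ℝ ∞ (Dt F) := by
  rw [Dt_eq (hF.differentiable (by norm_num))]
  exact (hF.fderiv_right (by norm_num)).clm_apply contDiff_const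

lemma contDiff_dx {F : ℝ×ℝ→ℝ} (hF : ContDiff ℝ ∞ F) : ContDiff ℝ ∞ (Dx F) := by
  rw [Dx_eq (hF.differentiable (by norm_num))]
  exact (hF.fderiv_right (by norm_num)).clm_apply contDiff_const

lemma sliceT_deriv_fderiv {F : ℝ×ℝ→ℝ} (hF : ContDiff ℝ ∞ F) (v : ℝ×ℝ) (t x : ℝ) :
    deriv (fun s => fderiv ℝ F (s, x) v) t = fderiv ℝ (fderiv ℝ F) (t,x) (1,0) v := by
  have h1 : ContDiff ℝ ∞ (fun p : ℝ×ℝ => fderiv ℝ F p v) :=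
    (hF.fderiv_right (by norm_num)).clm_apply contDiff_const
  rw [(hasDerivAt_sliceT (F := fun p => fderiv ℝ F p v)
    (h1.differentiable (by norm_num) _)).deriv]
  rw [fderiv_clm_apply ((hF.fderiv_right (m := ∞) (by norm_num)).differentiable
    (by norm_num) _) (differentiableAt_const v)]
  simp

lemma sliceX_deriv_fderiv {F : ℝ×ℝ→ℝ} (hF : ContDiff ℝ ∞ F) (v : ℝ×ℝ) (t x : ℝ) :
    deriv (fun y => fderiv ℝ F (t, y) v) x = fderiv ℝ (fderiv ℝ F) (t,x) (0,1) v := by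
  have h1 : ContDiff ℝ ∞ (fun p : ℝ×ℝ => fderiv ℝ F p v) :=
    (hF.fderiv_right (by norm_num)).clm_apply contDiff_const
  rw [(hasDerivAt_sliceX (F := fun p => fderiv ℝ F p v)
    (h1.differentiable (by norm_num) _)).deriv]
  rw [fderiv_clm_apply ((hF.fderiv_right (m := ∞) (by norm_num)).differentiable
    (by norm_num) _) (differentiableAt_const v)]
  simp

lemma Dt_Dx_comm {F : ℝ×ℝ→ℝ} (hF : ContDiff ℝ ∞ F) : Dt (Dx F) = Dx (Dt F) := by
  have hdF := hF.differentiable (by norm_num)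
  funext p
  obtain ⟨t, x⟩ := p
  have h1 : Dt (Dx F) (t,x) = deriv (fun s => fderiv ℝ F (s,x) (0,1)) t := by
    rw [Dt]
    congr 1
    funext s
    rw [Dx_eq hdF]
  have h2 : Dx (Dt F) (t,x) = deriv (fun y => fderiv ℝ F (t,y) (1,0)) x := by
    rw [Dx]
    congr 1
    funext y
    rw [Dt_eq hdF]
  rw [h1, h2, sliceT_deriv_fderiv hF, sliceX_deriv_fderiv hF]
  exact (hF.contDiffAt.isSymmSndFDerivAt (by rw [minSmoothness_of_isRCLikeNormedField]; exact two_le_inf)).eq _ _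

lemma sliceDiffT {F : ℝ×ℝ→ℝ} (hF : ContDiff ℝ ∞ F) (x t : ℝ) :
    DifferentiableAt ℝ (fun s => F (s,x)) t :=
  ((contDiff_sliceT hF x).differentiable (by norm_num)) t

lemma sliceDiffX {F : ℝ×ℝ→ℝ} (hF : ContDiff ℝ ∞ F) (t x : ℝ) :
    DifferentiableAt ℝ (fun y => F (t,y)) x :=
  ((contDiff_sliceX hF t).differentiable (by norm_num)) x

lemma Dt_mul {F G : ℝ×ℝ→ℝ} (hF : ContDiff ℝ ∞ F) (hG : ContDiff ℝ ∞ G) :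
    Dt (fun p => F p * G p) = fun p => Dt F p * G p + F p * Dt G p :=
  funext fun p => deriv_mul (sliceDiffT hF p.2 p.1) (sliceDiffT hG p.2 p.1)

lemma Dx_mul {F G : ℝ×ℝ→ℝ} (hF : ContDiff ℝ ∞ F) (hG : ContDiff ℝ ∞ G) :
    Dx (fun p => F p * G p) = fun p => Dx F p * G p + F p * Dx G p :=
  funext fun p => deriv_mul (sliceDiffX hF p.1 p.2) (sliceDiffX hG p.1 p.2)

lemma Dt_add {F G : ℝ×ℝ→ℝ} (hF : ContDiff ℝ ∞ F) (hG : ContDiff ℝ ∞ G) :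
    Dt (fun p => F p + G p) = fun p => Dt F p + Dt G p :=
  funext fun p => deriv_add (sliceDiffT hF p.2 p.1) (sliceDiffT hG p.2 p.1)

lemma Dx_add {F G : ℝ×ℝ→ℝ} (hF : ContDiff ℝ ∞ F) (hG : ContDiff ℝ ∞ G) :
    Dx (fun p => F p + G p) = fun p => Dx F p + Dx G p :=
  funext fun p => deriv_add (sliceDiffX hF p.1 p.2) (sliceDiffX hG p.1 p.2)

lemma Dt_const_mul {F : ℝ×ℝ→ℝ} (c : ℝ) (hF : ContDiff ℝ ∞ F) :
    Dt (fun p => c * F p) = fun p => c * Dt F p :=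
  funext fun p => deriv_const_mul c (sliceDiffT hF p.2 p.1)

lemma Dx_const_mul {F : ℝ×ℝ→ℝ} (c : ℝ) (hF : ContDiff ℝ ∞ F) :
    Dx (fun p => c * F p) = fun p => c * Dx F p :=
  funext fun p => deriv_const_mul c (sliceDiffX hF p.1 p.2)

def Dxn (n : ℕ) (F : ℝ×ℝ→ℝ) : ℝ×ℝ→ℝ := Dx^[n] F

lemma Dxn_zero (F : ℝ×ℝ→ℝ) : Dxn 0 F = F := rfl

lemma Dxn_succ_l (n : ℕ) (F : ℝ×ℝ→ℝ) : Dxn (n+1) F = Dxn n (Dx F) :=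
  Function.iterate_succ_apply Dx n F

lemma Dxn_succ_r (n : ℕ) (F : ℝ×ℝ→ℝ) : Dxn (n+1) F = Dx (Dxn n F) :=
  Function.iterate_succ_apply' Dx n F

lemma Dxn_dxn (m k : ℕ) (F : ℝ×ℝ→ℝ) : Dxn m (Dxn k F) = Dxn (m+k) F :=
  (Function.iterate_add_apply Dx m k F).symm

lemma contDiff_dxn {F : ℝ×ℝ→ℝ} (hF : ContDiff ℝ ∞ F) (n : ℕ) :
    ContDiff ℝ ∞ (Dxn n F) := by
  induction n generalizing F with
  | zero => exact hF
  | succ n ih => rw [Dxn_succ_l]; exact ih (contDiff_dx hF)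

lemma Dxn_slice (n : ℕ) (F : ℝ×ℝ→ℝ) (t x : ℝ) :
    Dxn n F (t,x) = iteratedDeriv n (fun y => F (t,y)) x := by
  induction n generalizing F with
  | zero => simp [Dxn, iteratedDeriv_zero]
  | succ n ih =>
      rw [Dxn_succ_l, ih, iteratedDeriv_succ']
      rfl

lemma Dxn_congr_slice {n : ℕ} {F G : ℝ×ℝ→ℝ} {t : ℝ} (h : ∀ y, F (t,y) = G (t,y)) (x : ℝ) :
    Dxn n F (t,x) = Dxn n G (t,x) := by
  rw [Dxn_slice, Dxn_slice]
  congr 1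
  exact funext h

lemma Dxn_add {F G : ℝ×ℝ→ℝ} (hF : ContDiff ℝ ∞ F) (hG : ContDiff ℝ ∞ G) (n : ℕ) :
    Dxn n (fun p => F p + G p) = fun p => Dxn n F p + Dxn n G p := by
  induction n generalizing F G with
  | zero => rfl
  | succ n ih =>
      rw [Dxn_succ_l, Dx_add hF hG, ih (contDiff_dx hF) (contDiff_dx hG), Dxn_succ_l, Dxn_succ_l]

lemma Dxn_const_mul {F : ℝ×ℝ→ℝ} (c : ℝ) (hF : ContDiff ℝ ∞ F) (n : ℕ) :
    Dxn n (fun p => c * F p) = fun p => c * Dxn n F p := by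
  induction n generalizing F with
  | zero => rfl
  | succ n ih =>
      rw [Dxn_succ_l, Dx_const_mul c hF, ih (contDiff_dx hF), Dxn_succ_l]

lemma Dxn_mul_bound {S : Set ℝ} : ∀ (n : ℕ) (F G : ℝ×ℝ→ℝ) (Kf Kg : ℝ),
    ContDiff ℝ ∞ F → ContDiff ℝ ∞ G → 0 ≤ Kf → 0 ≤ Kg →
    (∀ i ≤ n, ∀ t ∈ S, ∀ x : ℝ, |Dxn i F (t,x)| ≤ Kf) →
    (∀ i ≤ n, ∀ t ∈ S, ∀ x : ℝ, |Dxn i G (t,x)| ≤ Kg) →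
    ∀ t ∈ S, ∀ x : ℝ, |Dxn n (fun p => F p * G p) (t,x)| ≤ 2^n * (Kf * Kg)
  | 0, F, G, Kf, Kg, hF, hG, hKf, hKg, hbF, hbG, t, ht, x => by
      have := mul_le_mul (hbF 0 le_rfl t ht x) (hbG 0 le_rfl t ht x) (abs_nonneg _) hKf
      simpa [Dxn, abs_mul] using this
  | (n+1), F, G, Kf, Kg, hF, hG, hKf, hKg, hbF, hbG, t, ht, x => by
      have hsplit : Dxn (n+1) (fun p => F p * G p) (t,x)
          = Dxn n (fun p => Dx F p * G p) (t,x) + Dxn n (fun p => F p * Dx G p) (t,x) := by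
        rw [Dxn_succ_l, Dx_mul hF hG,
          Dxn_add ((contDiff_dx hF).mul hG) (hF.mul (contDiff_dx hG)) n]
      have h1 := Dxn_mul_bound n (Dx F) G Kf Kg (contDiff_dx hF) hG hKf hKg
        (fun i hi t ht x => by
          rw [← Dxn_succ_l]; exact hbF (i+1) (Nat.succ_le_succ hi) t ht x)
        (fun i hi t ht x => hbG i (Nat.le_succ_of_le hi) t ht x) t ht x
      have h2 := Dxn_mul_bound n F (Dx G) Kf Kg hF (contDiff_dx hG) hKf hKg
        (fun i hi t ht x => hbF i (Nat.le_succ_of_le hi) t ht x)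
        (fun i hi t ht x => by
          rw [← Dxn_succ_l]; exact hbG (i+1) (Nat.succ_le_succ hi) t ht x) t ht x
      calc |Dxn (n+1) (fun p => F p * G p) (t,x)|
          ≤ |Dxn n (fun p => Dx F p * G p) (t,x)| + |Dxn n (fun p => F p * Dx G p) (t,x)| := by
            rw [hsplit]; exact abs_add_le _ _
        _ ≤ 2^n * (Kf * Kg) + 2^n * (Kf * Kg) := add_le_add h1 h2
        _ = 2^(n+1) * (Kf * Kg) := by ring

lemma periodic_deriv {f : ℝ → ℝ} (hper : Function.Periodic f (2*π)) :
    Function.Periodic (deriv f) (2*π) := by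
  intro x
  have h : (fun y => f (y + 2*π)) = f := funext fun y => hper y
  calc deriv f (x + 2*π) = deriv (fun y => f (y + 2*π)) x := (deriv_comp_add_const _ _ _).symm
    _ = deriv f x := by rw [h]

lemma periodic_iteratedDeriv {f : ℝ → ℝ} (hper : Function.Periodic f (2*π)) (n : ℕ) :
    Function.Periodic (iteratedDeriv n f) (2*π) := by
  induction n with
  | zero => simpa [iteratedDeriv_zero] using hper
  | succ n ih => rw [iteratedDeriv_succ]; exact periodic_deriv ih

lemma sobolev_sup {f : ℝ → ℝ} (hf : ContDiff ℝ ∞ f) (hper : Function.Periodic f (2*π))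
    {E : ℝ} (hE : 0 ≤ E)
    (h0 : (∫ x in (-π)..π, (f x)^2) ≤ E^2)
    (h1 : (∫ x in (-π)..π, (deriv f x)^2) ≤ E^2) :
    ∀ x, |f x| ≤ 2 * E := by
  have hππ : (-π:ℝ) ≤ π := by linarith [Real.pi_pos]
  have hc : Continuous f := hf.continuous
  have hc' : Continuous (deriv f) := hf.continuous_deriv (by norm_num)
  obtain ⟨y, hy, hymin⟩ := isCompact_Icc.exists_isMinOn
    (⟨0, by constructor <;> linarith [Real.pi_pos]⟩ : (Icc (-π:ℝ) π).Nonempty)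
    ((hc.pow 2).continuousOn (s := Icc (-π) π))
  have hyE : (f y)^2 ≤ E^2 := by
    have hmono : (∫ _x in (-π)..π, (f y)^2) ≤ ∫ x in (-π)..π, (f x)^2 :=
      intervalIntegral.integral_mono_on hππ intervalIntegrable_const
        ((hc.pow 2).intervalIntegrable _ _) (fun z hz => isMinOn_iff.mp hymin z hz)
    rw [intervalIntegral.integral_const, smul_eq_mul] at hmono
    nlinarith [sq_nonneg (f y), Real.pi_gt_three]
  have habs : ∀ z : ℝ, |2 * f z * deriv f z| ≤ (f z)^2 + (deriv f z)^2 := by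
    intro z
    rw [abs_mul, abs_mul, abs_two]
    nlinarith [sq_nonneg (|f z| - |deriv f z|), abs_nonneg (f z), abs_nonneg (deriv f z),
      sq_abs (f z), sq_abs (deriv f z)]
  have hgc : Continuous (fun z => 2 * f z * deriv f z) := (continuous_const.mul hc).mul hc'
  have hgint : IntervalIntegrable (fun z => |2 * f z * deriv f z|) MeasureTheory.volume (-π) π :=
    hgc.abs.intervalIntegrable _ _
  have hIcc : ∀ x ∈ Icc (-π) π, (f x)^2 ≤ 3 * E^2 := by
    intro x hx
    have hftc : (∫ z in y..x, (2 * f z * deriv f z)) = (f x)^2 - (f y)^2 := by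
      apply intervalIntegral.integral_eq_sub_of_hasDerivAt
      · intro z _
        have := ((hf.differentiable (by norm_num)) z).hasDerivAt.fun_pow 2
        simpa [pow_one] using this
      · exact hgc.intervalIntegrable _ _
    have hsub : Set.uIoc y x ⊆ Set.uIoc (-π) π := by
      have h2 : Set.uIoc y x ⊆ Ioc (-π) π := by
        rw [Set.uIoc]
        exact Set.Ioc_subset_Ioc (le_inf hy.1 hx.1) (sup_le hy.2 hx.2)
      rwa [← Set.uIoc_of_le hππ] at h2
    have habs1 : |∫ z in y..x, 2 * f z * deriv f z| ≤ ∫ z in (-π)..π, |2 * f z * deriv f z| := by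
      have s1 : |∫ z in y..x, 2 * f z * deriv f z| ≤ abs (∫ z in y..x, |2 * f z * deriv f z|) := by
        simpa only [Real.norm_eq_abs] using intervalIntegral.norm_integral_le_abs_integral_norm
          (μ := MeasureTheory.volume) (f := fun z => 2 * f z * deriv f z) (a := y) (b := x)
      have s2 : abs (∫ z in y..x, |2 * f z * deriv f z|)
          ≤ abs (∫ z in (-π)..π, |2 * f z * deriv f z|) :=
        intervalIntegral.abs_integral_mono_interval hsub
          (Filter.Eventually.of_forall fun z => abs_nonneg _) hgint
      have s3 : abs (∫ z in (-π)..π, |2 * f z * deriv f z|)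
          = ∫ z in (-π)..π, |2 * f z * deriv f z| :=
        abs_of_nonneg (intervalIntegral.integral_nonneg hππ fun _ _ => abs_nonneg _)
      linarith
    have hsum : (∫ z in (-π)..π, |2 * f z * deriv f z|)
        ≤ (∫ z in (-π)..π, ((f z)^2 + (deriv f z)^2)) :=
      intervalIntegral.integral_mono_on hππ hgint
        (((hc.pow 2).add (hc'.pow 2)).intervalIntegrable _ _) (fun z _ => habs z)
    have hsplit : (∫ z in (-π)..π, ((f z)^2 + (deriv f z)^2))
        = (∫ z in (-π)..π, (f z)^2) + (∫ z in (-π)..π, (deriv f z)^2) :=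
      intervalIntegral.integral_add ((hc.pow 2).intervalIntegrable _ _)
        ((hc'.pow 2).intervalIntegrable _ _)
    have hle := le_abs_self (∫ z in y..x, 2 * f z * deriv f z)
    linarith
  intro x
  have h2π : (0:ℝ) < 2*π := by linarith [Real.pi_pos]
  set k : ℤ := round (x / (2*π)) with hk
  have hround := abs_sub_round (x / (2*π))
  have hxk : |x - (k:ℝ)*(2*π)| ≤ π := by
    have heq : |x - (k:ℝ)*(2*π)| = |x/(2*π) - (k:ℝ)| * (2*π) := by
      have harr : x - (k:ℝ)*(2*π) = (x/(2*π) - (k:ℝ)) * (2*π) := by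
        field_simp
      rw [harr, abs_mul, abs_of_pos h2π]
    rw [heq]
    calc |x/(2*π) - (k:ℝ)| * (2*π) ≤ (1/2) * (2*π) := by
          apply mul_le_mul_of_nonneg_right hround h2π.le
      _ = π := by ring
  have hmem : x - (k:ℝ)*(2*π) ∈ Icc (-π) π := by
    rcases abs_le.mp hxk with ⟨hl, hr⟩
    exact ⟨by linarith, by linarith⟩
  have hval : f (x - (k:ℝ)*(2*π)) = f x := hper.sub_int_mul_eq k
  have := hIcc _ hmem
  rw [hval] at this
  have h4 : (f x)^2 ≤ (2*E)^2 := by nlinarith [sq_nonneg E]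
  calc |f x| = Real.sqrt ((f x)^2) := (Real.sqrt_sq_eq_abs _).symm
    _ ≤ Real.sqrt ((2*E)^2) := Real.sqrt_le_sqrt h4
    _ = 2*E := Real.sqrt_sq (by linarith)

lemma sup_of_sobNorm {f : ℝ → ℝ} (hf : ContDiff ℝ ∞ f) (hper : Function.Periodic f (2*π))
    {M : ℝ} (hM : 0 ≤ M) (h : sobNorm 10 f ≤ M) :
    ∀ j ≤ 9, ∀ x, |iteratedDeriv j f x| ≤ 2 * M := by
  have hππ : (-π:ℝ) ≤ π := by linarith [Real.pi_pos]
  have hterm : ∀ j ∈ Finset.range (10+1), (0:ℝ) ≤ ∫ x in (-π)..π, (iteratedDeriv j f x)^2 :=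
    fun j _ => intervalIntegral.integral_nonneg hππ (fun u _ => sq_nonneg _)
  have hsumnn : 0 ≤ ∑ j ∈ Finset.range (10+1), ∫ x in (-π)..π, (iteratedDeriv j f x)^2 :=
    Finset.sum_nonneg hterm
  have hsum_le : (∑ j ∈ Finset.range (10+1), ∫ x in (-π)..π, (iteratedDeriv j f x)^2) ≤ M^2 := by
    rw [sobNorm] at h
    nlinarith [Real.sq_sqrt hsumnn, Real.sqrt_nonneg
      (∑ j ∈ Finset.range (10+1), ∫ x in (-π)..π, (iteratedDeriv j f x)^2)]
  have hcomp : ∀ j, j ≤ 10 → (∫ x in (-π)..π, (iteratedDeriv j f x)^2) ≤ M^2 := fun j hj =>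
    le_trans (Finset.single_le_sum hterm (Finset.mem_range.mpr (by omega))) hsum_le
  intro j hj
  have hsm : ContDiff ℝ ∞ (iteratedDeriv j f) := by
    rw [iteratedDeriv_eq_iterate]; exact hf.iterate_deriv j
  have hd : deriv (iteratedDeriv j f) = iteratedDeriv (j+1) f := iteratedDeriv_succ.symm
  exact sobolev_sup hsm (periodic_iteratedDeriv hper j) hM (hcomp j (by omega))
    (by rw [hd]; exact hcomp (j+1) (by omega))

lemma Dt_dxn_comm {F : ℝ×ℝ→ℝ} (hF : ContDiff ℝ ∞ F) (n : ℕ) :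
    Dt (Dxn n F) = Dxn n (Dt F) := by
  induction n generalizing F with
  | zero => rfl
  | succ n ih =>
      rw [Dxn_succ_l, ih (contDiff_dx hF), Dxn_succ_l, Dt_Dx_comm hF]

end NFT
set_option maxHeartbeats 1000000 in
open NFT in
/-- Second-order in time Taylor expansion of the nonlinear flow `∂_t w = ∂_{xx}(w³)`:
`w(τ) = b + τ ∂_{xx}(b³) + (τ²/2) ∂_{xx}(3b² ∂_{xx}(b³)) + O(τ³)` in `L²`. -/
theorem nonlinear_flow_taylor (M : ℝ) (hM : 0 < M) :
    ∃ C : ℝ, 0 < C ∧ ∀ (τ : ℝ) (b : ℝ → ℝ) (w : ℝ → ℝ → ℝ),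
      0 < τ →
      ContDiff ℝ (⊤ : ℕ∞) (Function.uncurry w) →
      (∀ t, Function.Periodic (w t) (2 * π)) →
      (∀ x, w 0 x = b x) →
      (∀ t ∈ Set.Icc (0 : ℝ) τ, ∀ x : ℝ,
        deriv (fun s => w s x) t = iteratedDeriv 2 (fun y => (w t y) ^ 3) x) →
      (∀ t ∈ Set.Icc (0 : ℝ) τ, sobNorm 10 (w t) ≤ M) →
      torusL2 (fun x => w τ x - b x - τ * iteratedDeriv 2 (fun y => (b y) ^ 3) x
          - τ ^ 2 / 2 * iteratedDeriv 2
              (fun y => 3 * (b y) ^ 2 * iteratedDeriv 2 (fun z => (b z) ^ 3) y) x)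
        ≤ C * τ ^ 3 := by
  have hπ := Real.pi_pos
  set K : ℝ := 2*M with hKdef
  have hK : 0 < K := by rw [hKdef]; linarith
  set K2 : ℝ := 2^8*(K*K) with hK2def
  have hK2 : 0 < K2 := by rw [hK2def]; positivity
  set K3 : ℝ := 2^8*(K*K2) with hK3def
  have hK3 : 0 < K3 := by rw [hK3def]; nlinarith
  set KB : ℝ := 3*(2^4*(K2*K3)) with hKBdef
  have hKB : 0 < KB := by rw [hKBdef]; nlinarith
  set C1 : ℝ := 6*(2^2*(K*(2^2*(K3*K3)))) + 3*(2^2*(K2*KB)) with hC1def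
  have hC1 : 0 < C1 := by rw [hC1def]; nlinarith
  refine ⟨Real.sqrt (2*π)*C1 + 1, by positivity, ?_⟩
  intro τ b w hτ hw hper hb hpde hsob
  have hIcc0 : (0:ℝ) ∈ Set.Icc (0:ℝ) τ := ⟨le_refl 0, hτ.le⟩
  have hIccτ : τ ∈ Set.Icc (0:ℝ) τ := ⟨hτ.le, le_refl τ⟩
  set W : ℝ×ℝ→ℝ := Function.uncurry w with hWdef
  have hW : ContDiff ℝ ∞ W := hw.of_le (by simp)
  set W2 : ℝ×ℝ→ℝ := fun p => W p * W p with hW2def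
  have hW2 : ContDiff ℝ ∞ W2 := hW.mul hW
  set W3 : ℝ×ℝ→ℝ := fun p => W p * W2 p with hW3def
  have hW3 : ContDiff ℝ ∞ W3 := hW.mul hW2
  set A : ℝ×ℝ→ℝ := Dxn 2 W3 with hAdef
  have hA : ContDiff ℝ ∞ A := contDiff_dxn hW3 2
  set E1 : ℝ×ℝ→ℝ := fun p => 3*(W2 p * A p) with hE1def
  have hE1 : ContDiff ℝ ∞ E1 := contDiff_const.mul (hW2.mul hA)
  set B : ℝ×ℝ→ℝ := Dxn 2 E1 with hBdef
  have hB : ContDiff ℝ ∞ B := contDiff_dxn hE1 2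
  set G : ℝ×ℝ→ℝ := fun p => 6*(W p * (A p * A p)) + 3*(W2 p * B p) with hGdef
  have hGa : ContDiff ℝ ∞ (fun p => 6*(W p * (A p * A p))) :=
    contDiff_const.mul (hW.mul (hA.mul hA))
  have hGb : ContDiff ℝ ∞ (fun p => 3*(W2 p * B p)) := contDiff_const.mul (hW2.mul hB)
  have hG : ContDiff ℝ ∞ G := hGa.add hGb
  set Φ : ℝ×ℝ→ℝ := Dxn 2 G with hΦdef
  -- slice identification of A
  have hA_slice : ∀ t x : ℝ, A (t,x) = iteratedDeriv 2 (fun y => (w t y)^3) x := by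
    intro t x
    rw [hAdef, Dxn_slice]
    congr 1
    funext y
    show w t y * (w t y * w t y) = (w t y)^3
    ring
  -- PDE : first time derivative
  have h1 : ∀ t ∈ Set.Icc (0:ℝ) τ, ∀ x : ℝ, Dt W (t,x) = A (t,x) := by
    intro t ht x
    have := hpde t ht x
    rw [hA_slice t x]
    exact this
  -- Dt of W3
  have hDtW3 : Dt W3 = fun p => 3*(W2 p * Dt W p) := by
    rw [hW3def, hW2def]
    rw [Dt_mul hW hW2, Dt_mul hW hW]
    funext p
    show Dt W p * (W p * W p) + W p * (Dt W p * W p + W p * Dt W p)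
        = 3*((W p * W p) * Dt W p)
    ring
  -- second time derivative
  have h2 : ∀ t ∈ Set.Icc (0:ℝ) τ, ∀ x : ℝ, Dt A (t,x) = B (t,x) := by
    intro t ht x
    have hcomm : Dt A = Dxn 2 (Dt W3) := by rw [hAdef, Dt_dxn_comm hW3 2]
    rw [hcomm, hDtW3, hBdef, hE1def]
    exact Dxn_congr_slice (fun y => by rw [h1 t ht y]) x
  -- Dt of E1
  have hDtE1 : Dt E1 = fun p => 3*((Dt W p * W p + W p * Dt W p) * A p + W2 p * Dt A p) := by
    rw [hE1def]
    rw [Dt_const_mul 3 (hW2.mul hA), Dt_mul hW2 hA]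
    have hDtW2 : Dt W2 = fun p => Dt W p * W p + W p * Dt W p := by
      rw [hW2def, Dt_mul hW hW]
    rw [hDtW2]
  -- third time derivative
  have h3 : ∀ t ∈ Set.Icc (0:ℝ) τ, ∀ x : ℝ, Dt B (t,x) = Φ (t,x) := by
    intro t ht x
    have hcomm : Dt B = Dxn 2 (Dt E1) := by rw [hBdef, Dt_dxn_comm hE1 2]
    rw [hcomm, hDtE1, hΦdef, hGdef]
    refine Dxn_congr_slice (fun y => ?_) x
    rw [h1 t ht y, h2 t ht y]
    ring
  -- sup bounds for x-derivatives of W on the strip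
  have hWb : ∀ i ≤ 9, ∀ t ∈ Set.Icc (0:ℝ) τ, ∀ x : ℝ, |Dxn i W (t,x)| ≤ K := by
    intro i hi t ht x
    have hslice : Dxn i W (t,x) = iteratedDeriv i (w t) x := by
      rw [Dxn_slice]
      congr 1
    rw [hslice, hKdef]
    have hsm : ContDiff ℝ ∞ (w t) := contDiff_sliceX hW t
    exact sup_of_sobNorm hsm (hper t) hM.le (hsob t ht) i hi x
  -- product bounds
  have hW2b : ∀ i ≤ 8, ∀ t ∈ Set.Icc (0:ℝ) τ, ∀ x : ℝ, |Dxn i W2 (t,x)| ≤ K2 := by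
    intro i hi t ht x
    have := Dxn_mul_bound (S := Set.Icc (0:ℝ) τ) i W W K K hW hW hK.le hK.le
      (fun j hj => hWb j (by omega)) (fun j hj => hWb j (by omega)) t ht x
    rw [hW2def]
    refine le_trans this ?_
    rw [hK2def]
    have : (2:ℝ)^i ≤ 2^8 := pow_le_pow_right₀ one_le_two hi
    nlinarith
  have hW3b : ∀ i ≤ 8, ∀ t ∈ Set.Icc (0:ℝ) τ, ∀ x : ℝ, |Dxn i W3 (t,x)| ≤ K3 := by
    intro i hi t ht x
    have := Dxn_mul_bound (S := Set.Icc (0:ℝ) τ) i W W2 K K2 hW hW2 hK.le hK2.le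
      (fun j hj => hWb j (by omega)) (fun j hj => hW2b j (by omega)) t ht x
    rw [hW3def]
    refine le_trans this ?_
    rw [hK3def]
    have : (2:ℝ)^i ≤ 2^8 := pow_le_pow_right₀ one_le_two hi
    nlinarith
  have hAb : ∀ i ≤ 6, ∀ t ∈ Set.Icc (0:ℝ) τ, ∀ x : ℝ, |Dxn i A (t,x)| ≤ K3 := by
    intro i hi t ht x
    have heq : Dxn i A (t,x) = Dxn (i+2) W3 (t,x) := by rw [hAdef, Dxn_dxn]
    rw [heq]
    exact hW3b (i+2) (by omega) t ht x
  have hE1b : ∀ i ≤ 4, ∀ t ∈ Set.Icc (0:ℝ) τ, ∀ x : ℝ, |Dxn i E1 (t,x)| ≤ KB := by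
    intro i hi t ht x
    have hmul := Dxn_mul_bound (S := Set.Icc (0:ℝ) τ) i W2 A K2 K3 hW2 hA hK2.le hK3.le
      (fun j hj => hW2b j (by omega)) (fun j hj => hAb j (by omega)) t ht x
    have hconst : Dxn i E1 (t,x) = 3 * Dxn i (fun p => W2 p * A p) (t,x) := by
      rw [hE1def, Dxn_const_mul 3 (hW2.mul hA)]
    rw [hconst, abs_mul]
    rw [hKBdef]
    have h2i : (2:ℝ)^i ≤ 2^4 := pow_le_pow_right₀ one_le_two hi
    have habs3 : |(3:ℝ)| = 3 := by norm_num
    rw [habs3]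
    nlinarith [abs_nonneg (Dxn i (fun p => W2 p * A p) (t,x))]
  have hBb : ∀ i ≤ 2, ∀ t ∈ Set.Icc (0:ℝ) τ, ∀ x : ℝ, |Dxn i B (t,x)| ≤ KB := by
    intro i hi t ht x
    have heq : Dxn i B (t,x) = Dxn (i+2) E1 (t,x) := by rw [hBdef, Dxn_dxn]
    rw [heq]
    exact hE1b (i+2) (by omega) t ht x
  have hAAb : ∀ i ≤ 2, ∀ t ∈ Set.Icc (0:ℝ) τ, ∀ x : ℝ,
      |Dxn i (fun p => A p * A p) (t,x)| ≤ 2^2*(K3*K3) := by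
    intro i hi t ht x
    have := Dxn_mul_bound (S := Set.Icc (0:ℝ) τ) i A A K3 K3 hA hA hK3.le hK3.le
      (fun j hj => hAb j (by omega)) (fun j hj => hAb j (by omega)) t ht x
    refine le_trans this ?_
    have : (2:ℝ)^i ≤ 2^2 := pow_le_pow_right₀ one_le_two hi
    nlinarith
  have hΦb : ∀ t ∈ Set.Icc (0:ℝ) τ, ∀ x : ℝ, |Φ (t,x)| ≤ C1 := by
    intro t ht x
    have hsplit : Φ (t,x) = 6 * Dxn 2 (fun p => W p * (A p * A p)) (t,x)
        + 3 * Dxn 2 (fun p => W2 p * B p) (t,x) := by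
      rw [hΦdef, hGdef, Dxn_add hGa hGb,
        Dxn_const_mul 6 (hW.mul (hA.mul hA)), Dxn_const_mul 3 (hW2.mul hB)]
    have hb1 := Dxn_mul_bound (S := Set.Icc (0:ℝ) τ) 2 W (fun p => A p * A p)
      K (2^2*(K3*K3)) hW (hA.mul hA) hK.le (by positivity)
      (fun j hj => hWb j (by omega)) (fun j hj => hAAb j (by omega)) t ht x
    have hb2 := Dxn_mul_bound (S := Set.Icc (0:ℝ) τ) 2 W2 B K2 KB hW2 hB hK2.le hKB.le
      (fun j hj => hW2b j (by omega)) (fun j hj => hBb j (by omega)) t ht x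
    rw [hsplit, hC1def]
    calc |6 * Dxn 2 (fun p => W p * (A p * A p)) (t,x)
        + 3 * Dxn 2 (fun p => W2 p * B p) (t,x)|
        ≤ 6 * |Dxn 2 (fun p => W p * (A p * A p)) (t,x)|
          + 3 * |Dxn 2 (fun p => W2 p * B p) (t,x)| := by
          have := abs_add_le (6 * Dxn 2 (fun p => W p * (A p * A p)) (t,x))
            (3 * Dxn 2 (fun p => W2 p * B p) (t,x))
          rw [abs_mul, abs_mul] at this
          simpa using this
      _ ≤ 6*(2^2*(K*(2^2*(K3*K3)))) + 3*(2^2*(K2*KB)) := by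
          have h6 : (0:ℝ) ≤ 6 := by norm_num
          nlinarith [abs_nonneg (Dxn 2 (fun p => W p * (A p * A p)) (t,x)),
            abs_nonneg (Dxn 2 (fun p => W2 p * B p) (t,x))]
  -- the remainder function
  set R : ℝ → ℝ := (fun x => w τ x - b x - τ * iteratedDeriv 2 (fun y => (b y) ^ 3) x
      - τ ^ 2 / 2 * iteratedDeriv 2
          (fun y => 3 * (b y) ^ 2 * iteratedDeriv 2 (fun z => (b z) ^ 3) y) x) with hRdef
  -- pointwise Taylor estimate
  have hptwise : ∀ x : ℝ, |R x| ≤ C1 * τ^3 / 2 := by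
    intro x
    set φ : ℝ → ℝ := fun s => W (s, x) with hφdef
    have hφ : ContDiff ℝ ∞ φ := contDiff_sliceT hW x
    have ud : UniqueDiffOn ℝ (Set.Icc (0:ℝ) τ) := uniqueDiffOn_Icc hτ
    have i1 : ∀ t ∈ Set.Icc (0:ℝ) τ, iteratedDerivWithin 1 φ (Set.Icc 0 τ) t = A (t,x) := by
      intro t ht
      rw [iteratedDerivWithin_succ, iteratedDerivWithin_zero]
      rw [DifferentiableAt.derivWithin (hφ.differentiable (by norm_num) t) (ud t ht)]
      exact h1 t ht x
    have i2 : ∀ t ∈ Set.Icc (0:ℝ) τ, iteratedDerivWithin 2 φ (Set.Icc 0 τ) t = B (t,x) := by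
      intro t ht
      rw [iteratedDerivWithin_succ]
      rw [derivWithin_congr (fun r hr => i1 r hr) (i1 t ht)]
      rw [DifferentiableAt.derivWithin
        (((contDiff_sliceT hA x).differentiable (by norm_num)) t) (ud t ht)]
      exact h2 t ht x
    have i3 : ∀ t ∈ Set.Icc (0:ℝ) τ, iteratedDerivWithin 3 φ (Set.Icc 0 τ) t = Φ (t,x) := by
      intro t ht
      rw [iteratedDerivWithin_succ]
      rw [derivWithin_congr (fun r hr => i2 r hr) (i2 t ht)]
      rw [DifferentiableAt.derivWithin
        (((contDiff_sliceT hB x).differentiable (by norm_num)) t) (ud t ht)]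
      exact h3 t ht x
    have h3le : ((2:ℕ) : WithTop ℕ∞) + 1 ≤ ∞ := by
      rw [show ((2:ℕ):WithTop ℕ∞) + 1 = ((3:ℕ∞):WithTop ℕ∞) by norm_cast]
      exact WithTop.coe_le_coe.2 le_top
    have htaylor := taylor_mean_remainder_bound (f := φ) (a := 0) (b := τ) (x := τ) (n := 2)
      hτ.le (hφ.contDiffOn.of_le h3le) hIccτ
      (fun y hy => by rw [Real.norm_eq_abs, i3 y hy]; exact hΦb y hy x)
    have hsum : taylorWithinEval φ 2 (Set.Icc 0 τ) 0 τ
        = φ 0 + τ * A (0,x) + τ^2/2 * B (0,x) := by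
      rw [taylor_within_apply]
      rw [Finset.sum_range_succ, Finset.sum_range_succ, Finset.sum_range_one]
      rw [i1 0 hIcc0, i2 0 hIcc0]
      simp only [iteratedDerivWithin_zero, smul_eq_mul, sub_zero, pow_zero, pow_one,
        Nat.factorial_zero, Nat.factorial_one, Nat.factorial_two, Nat.cast_one, Nat.cast_two]
      ring
    have hA0 : A (0,x) = iteratedDeriv 2 (fun y => (b y)^3) x := by
      rw [hA_slice 0 x]
      congr 1
      funext y
      rw [hb y]
    have hB0 : B (0,x) = iteratedDeriv 2
        (fun y => 3 * (b y)^2 * iteratedDeriv 2 (fun z => (b z)^3) y) x := by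
      rw [hBdef, Dxn_slice]
      congr 1
      funext y
      have hA0y : A (0,y) = iteratedDeriv 2 (fun z => (b z)^3) y := by
        rw [hA_slice 0 y]
        congr 1
        funext z
        rw [hb z]
      show 3*(W2 (0,y) * A (0,y)) = 3 * (b y)^2 * iteratedDeriv 2 (fun z => (b z)^3) y
      rw [hA0y]
      have hW2y : W2 (0,y) = b y * b y := by
        show w 0 y * w 0 y = b y * b y
        rw [hb y]
      rw [hW2y]
      ring
    have hφ0 : φ 0 = b x := hb x
    rw [hsum, hφ0, hA0, hB0, Real.norm_eq_abs] at htaylor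
    have hfact : ((Nat.factorial 2 : ℕ) : ℝ) = 2 := by norm_num [Nat.factorial]
    have heqR : R x = φ τ - (b x + τ * iteratedDeriv 2 (fun y => (b y)^3) x
        + τ^2/2 * iteratedDeriv 2
            (fun y => 3 * (b y)^2 * iteratedDeriv 2 (fun z => (b z)^3) y) x) := by
      show w τ x - b x - τ * iteratedDeriv 2 (fun y => (b y) ^ 3) x
          - τ ^ 2 / 2 * iteratedDeriv 2
              (fun y => 3 * (b y) ^ 2 * iteratedDeriv 2 (fun z => (b z) ^ 3) y) x = _
      show _ = w τ x - (b x + τ * iteratedDeriv 2 (fun y => (b y)^3) x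
        + τ^2/2 * iteratedDeriv 2
            (fun y => 3 * (b y)^2 * iteratedDeriv 2 (fun z => (b z)^3) y) x)
      ring
    rw [heqR]
    refine le_trans htaylor ?_
    rw [hfact]
    have : (τ - 0)^(2+1) = τ^3 := by ring
    rw [this]
  -- continuity of the remainder
  have hbW : b = fun y => W (0, y) := funext fun y => (hb y).symm
  have hbsm : ContDiff ℝ ∞ b := by rw [hbW]; exact contDiff_sliceX hW 0
  have hb3 : ContDiff ℝ ∞ (fun z => (b z)^3) := hbsm.pow 3
  have hP1sm : ContDiff ℝ ∞ (iteratedDeriv 2 (fun z => (b z)^3)) := by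
    rw [iteratedDeriv_eq_iterate]; exact hb3.iterate_deriv 2
  have hP2sm : ContDiff ℝ ∞ (iteratedDeriv 2
      (fun y => 3 * (b y)^2 * iteratedDeriv 2 (fun z => (b z)^3) y)) := by
    rw [iteratedDeriv_eq_iterate]
    exact ((contDiff_const.mul (hbsm.pow 2)).mul hP1sm).iterate_deriv 2
  have hwτ : Continuous (w τ) := (contDiff_sliceX hW τ).continuous
  have hR : Continuous R := by
    rw [hRdef]
    exact ((hwτ.sub hbsm.continuous).sub (continuous_const.mul hP1sm.continuous)).sub
      (continuous_const.mul hP2sm.continuous)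
  -- integrate
  have hc : 0 ≤ C1 * τ^3 / 2 := by positivity
  have hsq : ∀ x ∈ Set.Icc (-π) π, R x^2 ≤ (C1*τ^3/2)^2 := by
    intro x _
    have h := hptwise x
    have h2 := mul_self_le_mul_self (abs_nonneg (R x)) h
    calc R x^2 = |R x|^2 := (sq_abs (R x)).symm
      _ = |R x| * |R x| := pow_two _
      _ ≤ (C1*τ^3/2) * (C1*τ^3/2) := h2
      _ = (C1*τ^3/2)^2 := (pow_two _).symm
  have hmono : (∫ x in (-π)..π, R x^2) ≤ ∫ _x in (-π)..π, (C1*τ^3/2)^2 :=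
    intervalIntegral.integral_mono_on (by linarith) ((hR.pow 2).intervalIntegrable _ _)
      intervalIntegrable_const hsq
  have hconst : (∫ _x in (-π)..π, (C1*τ^3/2)^2) = (2*π) * (C1*τ^3/2)^2 := by
    rw [intervalIntegral.integral_const, smul_eq_mul]
    ring
  have htor : torusL2 R ≤ Real.sqrt ((2*π) * (C1*τ^3/2)^2) := by
    rw [torusL2]
    apply Real.sqrt_le_sqrt
    rw [← hconst]
    exact hmono
  have hfin : Real.sqrt ((2*π)*(C1*τ^3/2)^2) = Real.sqrt (2*π) * (C1*τ^3/2) := by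
    rw [Real.sqrt_mul (by positivity), Real.sqrt_sq hc]
  refine le_trans htor ?_
  rw [hfin]
  have hs2π : 0 ≤ Real.sqrt (2*π) := Real.sqrt_nonneg _
  nlinarith [pow_pos hτ 3, mul_nonneg hs2π hC1.le]
end
end
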